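/- arXiv:cs/0611046 — 2 statements merged into one kernel-verified Lean document; each statement's English description precedes it below -/
import Mathlib

section
/- Multi-linear model theorem for preferential logic P: if a finite set Γ of formulas is satisfiable in a preferential model, then Γ is satisfiable in a multi-linear preferential model, i.e. a finite model whose set of worlds partitions into components W₁, ..., Wₙ such that < is a total (strict linear) order on each component and elements of different components are <-incomparable. -/
/-- Propositional formulas over atoms `α`. -/
inductive PForm (α : Type) : Type
  | atom : α → PForm α
  | neg : PForm α → PForm α
  | conj : PForm α → PForm α → PForm α
  | disj : PForm α → PForm α → PForm α

/-- Truth of a propositional formula at a world, given a valuation. -/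
def PForm.sat {α W : Type} (V : W → α → Prop) : W → PForm α → Prop
  | w, .atom a => V w a
  | w, .neg A => ¬ PForm.sat V w A
  | w, .conj A B => PForm.sat V w A ∧ PForm.sat V w B
  | w, .disj A B => PForm.sat V w A ∨ PForm.sat V w B

/-- `minW lt S w` : `w` is a `lt`-minimal world satisfying `S`. -/
def minW {W : Type} (lt : W → W → Prop) (S : W → Prop) (w : W) : Prop :=
  S w ∧ ∀ w', lt w' w → ¬ S w'

/-- The language of P extended with boxed formulas `□¬A`. -/
inductive CForm (α : Type) : Type
  | prop : PForm α → CForm α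
  | cond : PForm α → PForm α → CForm α
  | boxneg : PForm α → CForm α
  | neg : CForm α → CForm α
  | conj : CForm α → CForm α → CForm α
  | disj : CForm α → CForm α → CForm α

/-- A preferential model: `<` irreflexive, transitive, smooth. -/
structure PrefModel (α : Type) where
  W : Type
  lt : W → W → Prop
  V : W → α → Prop
  nonempty : Nonempty W
  irrefl : Irreflexive lt
  trans : Transitive lt
  smooth : ∀ (A : PForm α) (w : W), PForm.sat V w A →
      minW lt (fun v => PForm.sat V v A) w ∨
        ∃ w', minW lt (fun v => PForm.sat V v A) w' ∧ lt w' w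

/-- Truth of a formula of the extended language at a world. -/
def csat {α : Type} (M : PrefModel α) : M.W → CForm α → Prop
  | w, .prop A => PForm.sat M.V w A
  | _, .cond A B => ∀ v, minW M.lt (fun u => PForm.sat M.V u A) v → PForm.sat M.V v B
  | w, .boxneg A => ∀ w', M.lt w' w → ¬ PForm.sat M.V w' A
  | w, .neg F => ¬ csat M w F
  | w, .conj F G => csat M w F ∧ csat M w G
  | w, .disj F G => csat M w F ∨ csat M w G

/-- A multi-linear model: finite, and the worlds partition into components
(the fibers of `c`) on each of which `<` is a strict total order, while worlds
in distinct components are incomparable. -/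
def MultiLinear {α : Type} (M : PrefModel α) : Prop :=
  Finite M.W ∧ ∃ (I : Type) (c : M.W → I),
    (∀ w w', c w = c w' → w ≠ w' → M.lt w w' ∨ M.lt w' w) ∧
    (∀ w w', c w ≠ c w' → ¬ M.lt w w' ∧ ¬ M.lt w' w)


/-! Take `M, w₀` satisfying `Γ`. Let `Λ` collect the antecedents of the conditionals and the
formulas under the boxes of `Γ`, and take as roots `w₀` together with a minimal counterexample
to every conditional of `Γ` that is false in `M`. Below each root `v` there is a finite cone
containing `v` and closed under minimal witnesses: whenever an `A`-world (`A ∈ Λ`) lies strictly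
below a point of the cone, so does a `<`-minimal `A`-world of the cone. The new model is the
disjoint union of the cones, each linearly ordered by a linear extension of `<`. Closure makes
minimality for `A ∈ Λ` pass from the new model back to `M`; at a root, every world of its cone
lies below it in `M`, so minimality also passes forward and boxed formulas are preserved there.
Hence the root `w₀` satisfies `Γ`. -/

lemma PForm.sat_comp {α W W' : Type} (V : W → α → Prop) (f : W' → W) (x : W') (A : PForm α) :
    PForm.sat (fun y => V (f y)) x A ↔ PForm.sat V (f x) A := by
  induction A with
  | atom a => rfl
  | neg A ih => simp only [PForm.sat, ih]
  | conj A B ihA ihB => simp only [PForm.sat, ihA, ihB]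
  | disj A B ihA ihB => simp only [PForm.sat, ihA, ihB]

def condsOf {α : Type} : CForm α → List (PForm α × PForm α)
  | .prop _ => []
  | .cond A B => [(A, B)]
  | .boxneg _ => []
  | .neg F => condsOf F
  | .conj F G => condsOf F ++ condsOf G
  | .disj F G => condsOf F ++ condsOf G

def boxesOf {α : Type} : CForm α → List (PForm α)
  | .prop _ => []
  | .cond _ _ => []
  | .boxneg A => [A]
  | .neg F => boxesOf F
  | .conj F G => boxesOf F ++ boxesOf G
  | .disj F G => boxesOf F ++ boxesOf G

lemma minW_or_exists_minW_lt {T : Type} [PartialOrder T] [WellFoundedLT T] (S : T → Prop)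
    {w : T} (hw : S w) : minW (· < ·) S w ∨ ∃ w', minW (· < ·) S w' ∧ w' < w := by
  obtain ⟨m, ⟨hSm, hmw⟩, hmin⟩ := wellFounded_lt.has_min {v | S v ∧ v ≤ w} ⟨w, hw, le_rfl⟩
  have hm : minW (· < ·) S m := ⟨hSm, fun z hz hSz => hmin z ⟨hSz, hz.le.trans hmw⟩ hz⟩
  rcases hmw.lt_or_eq with hlt | rfl
  · exact Or.inr ⟨m, hm, hlt⟩
  · exact Or.inl hm

theorem strictMono_toLinearExtension {β : Type*} [PartialOrder β] :
    StrictMono (toLinearExtension : β →o LinearExtension β) :=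
  fun _ _ h => lt_of_le_of_ne (toLinearExtension.monotone h.le) h.ne

instance {β : Type*} [Finite β] : Finite (LinearExtension β) := ‹Finite β›

def ForthAt {T W : Type} [LT T] [LT W] (π : T → W) (x : T) : Prop :=
  ∀ x' < x, π x' < π x

lemma exists_finset_witnesses {ι W : Type} (s : List ι) (p : ι → W → Prop) :
    ∃ R : Finset W, ∀ i ∈ s, (∃ v, p i v) → ∃ v ∈ R, p i v := by
  classical
  induction s with
  | nil => exact ⟨∅, by simp⟩
  | cons i s ih =>
    obtain ⟨R, hR⟩ := ih
    by_cases hi : ∃ v, p i v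
    · obtain ⟨v, hv⟩ := hi
      refine ⟨insert v R, fun j hj hex => ?_⟩
      rcases List.mem_cons.1 hj with rfl | hj
      · exact ⟨v, Finset.mem_insert_self v R, hv⟩
      · obtain ⟨u, hu, hpu⟩ := hR j hj hex
        exact ⟨u, Finset.mem_insert_of_mem hu, hpu⟩
    · refine ⟨R, fun j hj hex => ?_⟩
      rcases List.mem_cons.1 hj with rfl | hj
      exacts [absurd hex hi, hR j hj hex]

namespace PrefModel

variable {α : Type} (M : PrefModel α)

instance : IsStrictOrder M.W M.lt where
  irrefl := M.irrefl
  trans _ _ _ h₁ h₂ := M.trans h₁ h₂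

/- Pitfall: on `(M.pullback π).W` instance search finds this order, not the one of `T` that
`(M.pullback π).W` unfolds to; hence the ascription `(x' : T)` in `csat_pullback_cond_iff`. -/
instance : PartialOrder M.W := partialOrderOfSO M.lt

def Refutes (A B : PForm α) (v : M.W) : Prop :=
  minW M.lt (fun u => PForm.sat M.V u A) v ∧ ¬ PForm.sat M.V v B

lemma exists_minW_lt {A : PForm α} {y v : M.W} (hyv : y < v) (hy : PForm.sat M.V y A) :
    ∃ m, minW M.lt (fun u => PForm.sat M.V u A) m ∧ m < v := by
  rcases M.smooth A y hy with hmin | ⟨m, hmin, hmy⟩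
  · exact ⟨y, hmin, hyv⟩
  · exact ⟨m, hmin, lt_trans hmy hyv⟩

section Pullback

variable {T : Type} [PartialOrder T] [WellFoundedLT T] [Nonempty T] (π : T → M.W)

def pullback : PrefModel α where
  W := T
  lt := (· < ·)
  V x := M.V (π x)
  nonempty := ‹_›
  irrefl := lt_irrefl
  trans _ _ _ := lt_trans
  smooth _ _ h := minW_or_exists_minW_lt _ h

lemma sat_pullback (x : T) (A : PForm α) :
    PForm.sat (M.pullback π).V x A ↔ PForm.sat M.V (π x) A :=
  PForm.sat_comp M.V π x A

/-- The back condition of a bounded morphism, restricted to witnesses of `A`. -/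
def BackAt (A : PForm α) (x : T) : Prop :=
  ∀ y < π x, PForm.sat M.V y A → ∃ x' < x, PForm.sat M.V (π x') A

variable {M π}

lemma minW_of_minW_pullback {A : PForm α} {x : T} (hx : M.BackAt π A x)
    (h : minW (M.pullback π).lt (fun u => PForm.sat (M.pullback π).V u A) x) :
    minW M.lt (fun u => PForm.sat M.V u A) (π x) := by
  refine ⟨(M.sat_pullback π x A).1 h.1, fun y hy hyA => ?_⟩
  obtain ⟨x', hx', hx'A⟩ := hx y hy hyA
  exact h.2 x' hx' ((M.sat_pullback π x' A).2 hx'A)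

lemma minW_pullback_of_minW {A : PForm α} {x : T} (hx : ForthAt π x)
    (h : minW M.lt (fun u => PForm.sat M.V u A) (π x)) :
    minW (M.pullback π).lt (fun u => PForm.sat (M.pullback π).V u A) x :=
  ⟨(M.sat_pullback π x A).2 h.1,
    fun x' hx' hx'A => h.2 _ (hx x' hx') ((M.sat_pullback π x' A).1 hx'A)⟩

lemma csat_pullback_boxneg_iff {A : PForm α} {x : T} (hback : M.BackAt π A x)
    (hforth : ForthAt π x) :
    csat (M.pullback π) x (.boxneg A) ↔ csat M (π x) (.boxneg A) := by
  refine ⟨fun hN y hy hyA => ?_, fun hM x' hx' hx'A => ?_⟩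
  · obtain ⟨x', hx', hx'A⟩ := hback y hy hyA
    exact hN x' hx' ((M.sat_pullback π x' A).2 hx'A)
  · exact hM _ (hforth x' hx') ((M.sat_pullback π x' A).1 hx'A)

lemma csat_pullback_cond_iff {A B : PForm α} (hback : ∀ x, M.BackAt π A x)
    (hforth : (∃ v, M.Refutes A B v) → ∃ x, ForthAt π x ∧ M.Refutes A B (π x))
    (x : T) (w : M.W) :
    csat (M.pullback π) x (.cond A B) ↔ csat M w (.cond A B) := by
  refine ⟨fun hN => ?_, fun hM (x' : T) hx' =>
    (M.sat_pullback π x' B).2 (hM _ (minW_of_minW_pullback (hback x') hx'))⟩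
  by_contra hM
  obtain ⟨x', hx', hmin, hB⟩ := hforth (by simpa [csat, Refutes] using hM)
  exact hB ((M.sat_pullback π x' B).1 (hN x' (minW_pullback_of_minW hx' hmin)))

theorem csat_pullback_iff (F : CForm α) {x : T} (hforth : ForthAt π x)
    (hconds : ∀ p ∈ condsOf F, (∀ x, M.BackAt π p.1 x) ∧
      ((∃ v, M.Refutes p.1 p.2 v) → ∃ x, ForthAt π x ∧ M.Refutes p.1 p.2 (π x)))
    (hboxes : ∀ A ∈ boxesOf F, M.BackAt π A x) :
    csat (M.pullback π) x F ↔ csat M (π x) F := by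
  induction F with
  | prop A => exact M.sat_pullback π x A
  | cond A B =>
    obtain ⟨hback, hwit⟩ := hconds (A, B) (List.mem_singleton_self _)
    exact csat_pullback_cond_iff hback hwit x (π x)
  | boxneg A => exact csat_pullback_boxneg_iff (hboxes A (List.mem_singleton_self _)) hforth
  | neg F ih => exact not_congr (ih hconds hboxes)
  | conj F G ihF ihG =>
    simp only [condsOf, boxesOf, List.mem_append] at hconds hboxes
    exact and_congr (ihF (fun p hp => hconds p (.inl hp)) (fun A hA => hboxes A (.inl hA)))
      (ihG (fun p hp => hconds p (.inr hp)) (fun A hA => hboxes A (.inr hA)))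
  | disj F G ihF ihG =>
    simp only [condsOf, boxesOf, List.mem_append] at hconds hboxes
    exact or_congr (ihF (fun p hp => hconds p (.inl hp)) (fun A hA => hboxes A (.inl hA)))
      (ihG (fun p hp => hconds p (.inr hp)) (fun A hA => hboxes A (.inr hA)))

end Pullback

theorem multiLinear_pullback_sigma {ι : Type} {β : ι → Type} [Finite ι] [∀ i, Finite (β i)]
    [∀ i, LinearOrder (β i)] [Nonempty (Σ i, β i)] (π : (Σ i, β i) → M.W) :
    MultiLinear (M.pullback π) := by
  refine ⟨inferInstanceAs (Finite (Σ i, β i)), ι, Sigma.fst, ?_, ?_⟩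
  · rintro ⟨i, a⟩ ⟨j, b⟩ (rfl : i = j) hne
    rcases lt_trichotomy a b with h | rfl | h
    · exact .inl (Sigma.mk_lt_mk_iff.2 h)
    · exact absurd rfl hne
    · exact .inr (Sigma.mk_lt_mk_iff.2 h)
  · rintro ⟨i, a⟩ ⟨j, b⟩ hij
    exact ⟨fun h => hij (Sigma.lt_def.1 h).1, fun h => hij (Sigma.lt_def.1 h).1.symm⟩

def MinClosed (A : PForm α) (S : Finset M.W) : Prop :=
  ∀ u ∈ S, ∀ y < u, PForm.sat M.V y A →
    ∃ m ∈ S, minW M.lt (fun w => PForm.sat M.V w A) m ∧ m < u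

theorem exists_cone (Λ : Finset (PForm α)) (v : M.W) :
    ∃ S : Finset M.W, v ∈ S ∧ (∀ u ∈ S, u ≤ v) ∧ ∀ A ∈ Λ, M.MinClosed A S := by
  classical
  induction Λ using Finset.strongInduction generalizing v with
  | H Λ ih =>
  have below : ∀ A : Λ, ∃ S : Finset M.W, (∀ u ∈ S, u < v) ∧
      (∀ B ∈ Λ.erase A, M.MinClosed B S) ∧ (∀ u ∈ S, ∀ y < u, ¬ PForm.sat M.V y A) ∧
      ∀ y < v, PForm.sat M.V y A →
        ∃ m ∈ S, minW M.lt (fun w => PForm.sat M.V w A) m ∧ m < v := by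
    rintro ⟨A, hA⟩
    by_cases hex : ∃ y < v, PForm.sat M.V y A
    · obtain ⟨y, hyv, hy⟩ := hex
      obtain ⟨m, hm, hmv⟩ := M.exists_minW_lt hyv hy
      -- no `A`-world lies below the minimal `A`-world `m`, so `A` is dropped from `Λ` there
      obtain ⟨S, hmS, hSm, hS⟩ := ih _ (Finset.erase_ssubset hA) m
      exact ⟨S, fun u hu => (hSm u hu).trans_lt hmv, hS,
        fun u hu y hyu => hm.2 y (hyu.trans_le (hSm u hu)), fun _ _ _ => ⟨m, hmS, hm, hmv⟩⟩
    · exact ⟨∅, by simp, by simp [MinClosed], by simp, fun y hyv hy => (hex ⟨y, hyv, hy⟩).elim⟩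
  choose S hSv hSclosed hSfree hSwit using below
  have hsub : ∀ A, S A ⊆ insert v (Finset.univ.biUnion S) := fun A =>
    (Finset.subset_biUnion_of_mem S (Finset.mem_univ A)).trans (Finset.subset_insert _ _)
  refine ⟨insert v (Finset.univ.biUnion S), Finset.mem_insert_self _ _, ?_, ?_⟩
  · simp only [Finset.mem_insert, Finset.mem_biUnion, Finset.mem_univ, true_and]
    rintro u (rfl | ⟨A, hu⟩)
    exacts [le_rfl, (hSv A u hu).le]
  · intro B hB u hu y hyu hy
    rcases Finset.mem_insert.1 hu with rfl | hu
    · obtain ⟨m, hmS, hm⟩ := hSwit ⟨B, hB⟩ y hyu hy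
      exact ⟨m, hsub _ hmS, hm⟩
    obtain ⟨A, -, hu⟩ := Finset.mem_biUnion.1 hu
    have hBA : B ≠ A := fun h => hSfree A u hu y hyu (h ▸ hy)
    obtain ⟨m, hmS, hm⟩ := hSclosed A B (Finset.mem_erase.2 ⟨hBA, hB⟩) u hu y hyu hy
    exact ⟨m, hsub A hmS, hm⟩

noncomputable def cone (Λ : Finset (PForm α)) (v : M.W) : Finset M.W :=
  (M.exists_cone Λ v).choose

section Cones

variable {M} {Λ : Finset (PForm α)}

lemma mem_cone_self (v : M.W) : v ∈ M.cone Λ v :=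
  (M.exists_cone Λ v).choose_spec.1

lemma le_of_mem_cone {v u : M.W} (hu : u ∈ M.cone Λ v) : u ≤ v :=
  (M.exists_cone Λ v).choose_spec.2.1 u hu

lemma minClosed_cone {A : PForm α} (hA : A ∈ Λ) (v : M.W) : M.MinClosed A (M.cone Λ v) :=
  (M.exists_cone Λ v).choose_spec.2.2 A hA

variable (M Λ) (R : Finset M.W)

abbrev ConeSum : Type := Σ v : R, LinearExtension (M.cone Λ v)

def coneProj (x : M.ConeSum Λ R) : M.W := (x.2 : M.cone Λ x.1).1

noncomputable def coneRoot {v : M.W} (hv : v ∈ R) : M.ConeSum Λ R :=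
  ⟨⟨v, hv⟩, toLinearExtension ⟨v, mem_cone_self v⟩⟩

instance [Nonempty R] : Nonempty (M.ConeSum Λ R) :=
  let ⟨v⟩ := ‹Nonempty R›; ⟨M.coneRoot Λ R v.2⟩

noncomputable def coneModel [Nonempty R] : PrefModel α := M.pullback (M.coneProj Λ R)

theorem multiLinear_coneModel [Nonempty R] : MultiLinear (M.coneModel Λ R) :=
  M.multiLinear_pullback_sigma _

variable {M Λ R}

lemma backAt_coneProj {A : PForm α} (hA : A ∈ Λ) (x : M.ConeSum Λ R) :
    M.BackAt (M.coneProj Λ R) A x := by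
  obtain ⟨v, a⟩ := x
  obtain ⟨a, rfl⟩ : ∃ a' : M.cone Λ v, toLinearExtension a' = a := ⟨a, rfl⟩
  intro y hy hyA
  obtain ⟨m, hmS, hm, hmu⟩ := minClosed_cone hA v a a.2 y hy hyA
  have hlt : toLinearExtension ⟨m, hmS⟩ < toLinearExtension a :=
    strictMono_toLinearExtension (show ⟨m, hmS⟩ < a from hmu)
  exact ⟨⟨v, toLinearExtension ⟨m, hmS⟩⟩, Sigma.mk_lt_mk_iff.2 hlt, hm.1⟩

lemma forthAt_coneRoot {v : M.W} (hv : v ∈ R) :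
    ForthAt (M.coneProj Λ R) (M.coneRoot Λ R hv) := by
  rintro ⟨w, b⟩ hb
  obtain rfl : w = ⟨v, hv⟩ := (Sigma.lt_def.1 hb).1
  obtain ⟨b, rfl⟩ : ∃ b' : M.cone Λ v, toLinearExtension b' = b := ⟨b, rfl⟩
  have hb := Sigma.mk_lt_mk_iff.1 hb
  exact lt_of_le_of_ne (le_of_mem_cone b.2) fun h => hb.ne (Subtype.ext h)

end Cones

end PrefModel

open PrefModel in
/-- any finite satisfiable set of formulas of P is satisfiable in
a multi-linear preferential model. -/
theorem multilinear_model_theorem {α : Type} (Γ : List (CForm α))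
    (hsat : ∃ (M : PrefModel α) (w : M.W), ∀ F ∈ Γ, csat M w F) :
    ∃ M : PrefModel α, MultiLinear M ∧ ∃ w : M.W, ∀ F ∈ Γ, csat M w F := by
  classical
  obtain ⟨M, w₀, hw⟩ := hsat
  let Λ : Finset (PForm α) := ((Γ.flatMap condsOf).map Prod.fst ++ Γ.flatMap boxesOf).toFinset
  have hΛcond : ∀ p ∈ Γ.flatMap condsOf, p.1 ∈ Λ := fun p hp =>
    List.mem_toFinset.2 (List.mem_append_left _ (List.mem_map_of_mem hp))
  have hΛbox : ∀ F ∈ Γ, ∀ A ∈ boxesOf F, A ∈ Λ := fun F hF A hA =>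
    List.mem_toFinset.2 (List.mem_append_right _ (List.mem_flatMap.2 ⟨F, hF, hA⟩))
  obtain ⟨R, hR⟩ := exists_finset_witnesses (Γ.flatMap condsOf) fun p => M.Refutes p.1 p.2
  let roots : Finset M.W := insert w₀ R
  have hw₀ : w₀ ∈ roots := Finset.mem_insert_self w₀ R
  have : Nonempty roots := ⟨⟨w₀, hw₀⟩⟩
  refine ⟨M.coneModel Λ roots, M.multiLinear_coneModel Λ roots, M.coneRoot Λ roots hw₀,
    fun F hF => (csat_pullback_iff F (forthAt_coneRoot hw₀) (fun p hp => ?_)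
      fun A hA => backAt_coneProj (hΛbox F hF A hA) _).2 (hw F hF)⟩
  have hpΓ : p ∈ Γ.flatMap condsOf := List.mem_flatMap.2 ⟨F, hF, hp⟩
  refine ⟨backAt_coneProj (hΛcond p hpΓ), fun hex => ?_⟩
  obtain ⟨v, hvR, hv⟩ := hR p hpΓ hex
  exact ⟨_, forthAt_coneRoot (Finset.mem_insert_of_mem hvR), hv⟩
end

section
/- Rational Monotonicity (RM) is semantically valid in all rational models: if A |~ B holds in M and it is not the case that A |~ ¬C holds in M, then (A ∧ C) |~ B holds in M. -/
/-- A rational model: `<` irreflexive, transitive, modular, smooth. -/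
structure RatModel (α : Type) where
  W : Type
  lt : W → W → Prop
  V : W → α → Prop
  nonempty : Nonempty W
  irrefl : Irreflexive lt
  trans : Transitive lt
  modular : ∀ w w₁ w₂, lt w₁ w₂ → lt w₁ w ∨ lt w w₂
  smooth : ∀ (A : PForm α) (w : W), PForm.sat V w A →
      minW lt (fun v => PForm.sat V v A) w ∨
        ∃ w', minW lt (fun v => PForm.sat V v A) w' ∧ lt w' w

/-- The conditional `A |~ B` holds in `M`. -/
def condHolds {α : Type} (M : RatModel α) (A B : PForm α) : Prop :=
  ∀ w, minW M.lt (fun v => PForm.sat M.V v A) w → PForm.sat M.V w B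

/-- Rational Monotonicity: if `A |~ B` holds in a rational
model `M` and `A |~ ¬C` does not hold in `M`, then `A ∧ C |~ B` holds. -/
theorem rm_valid {α : Type} (M : RatModel α) (A B C : PForm α)
    (h1 : condHolds M A B) (h2 : ¬ condHolds M A (PForm.neg C)) :
    condHolds M (PForm.conj A C) B := by
  -- Get a minimal A-world w0 satisfying C
  unfold condHolds at h2
  push_neg at h2
  obtain ⟨w0, hw0min, hw0C⟩ := h2
  simp only [PForm.sat, not_not] at hw0C
  intro w hw
  obtain ⟨hwAC, hwmin⟩ := hw
  obtain ⟨hwA, hwC⟩ := hwAC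
  -- claim: w is minimal for A
  apply h1 w
  refine ⟨hwA, fun v hv hvA => ?_⟩
  -- v < w satisfies A; get a minimal A-world w'' with w'' ≤ v
  have hmin : ∃ w'', minW M.lt (fun u => PForm.sat M.V u A) w'' ∧
      (w'' = v ∨ M.lt w'' v) := by
    rcases M.smooth A v hvA with h | ⟨w'', hm, hlt⟩
    · exact ⟨v, h, Or.inl rfl⟩
    · exact ⟨w'', hm, Or.inr hlt⟩
  obtain ⟨w'', hm'', hle⟩ := hmin
  have hlt : M.lt w'' w := by
    rcases hle with rfl | h
    · exact hv
    · exact M.trans h hv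
  rcases M.modular w0 w'' w hlt with h | h
  · exact hw0min.2 w'' h hm''.1
  · exact hwmin w0 h ⟨hw0min.1, hw0C⟩
end
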